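/- arXiv:1711.05068 — 4 statements merged into one kernel-verified Lean document; each statement's English description precedes it below -/
import Mathlib

section
/- Let M be an n×n real positive semidefinite matrix and S an n×n real positive definite matrix. Then Tr(S⁻¹ M) + Tr(S) ≥ 2·Tr(√M), where √M is the positive semidefinite square root of M. -/
/-
Complete the square: for Hermitian `A` and positive definite `S`,
`0 ≤ Tr((A - S) S⁻¹ (A - S)) = Tr(S⁻¹ A²) - 2 Tr A + Tr S`. Taking `A = √M` gives the theorem.
-/

open Matrix

/-- The positive semidefinite square root, as `Matrix.PosSemidef.sqrt` was defined in the older Mathlib. -/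
noncomputable def Matrix.PosSemidef.sqrt {n : Type*} [Fintype n] [DecidableEq n]
    {A : Matrix n n ℝ} (hA : A.PosSemidef) : Matrix n n ℝ :=
  hA.1.eigenvectorUnitary.1 * diagonal ((↑) ∘ (√·) ∘ hA.1.eigenvalues) *
    (star hA.1.eigenvectorUnitary : Matrix n n ℝ)

namespace Matrix

variable {n : Type*} [Fintype n] [DecidableEq n]

lemma two_mul_trace_le_trace_inv_mul_mul_self_add_trace {A S : Matrix n n ℝ}
    (hA : A.IsHermitian) (hS : S.PosDef) :
    2 * trace A ≤ trace (S⁻¹ * (A * A)) + trace S := by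
  have hsq : 0 ≤ trace ((A - S) * S⁻¹ * (A - S)) := by
    have h := (hS.inv.posSemidef.conjTranspose_mul_mul_same (A - S)).trace_nonneg
    rwa [conjTranspose_sub, hA.eq, hS.isHermitian.eq] at h
  have hdet : IsUnit S.det := hS.det_pos.ne'.isUnit
  have hexpand : (A - S) * S⁻¹ * (A - S) =
      A * (S⁻¹ * A) - A * (S⁻¹ * S) - S * S⁻¹ * A + S * S⁻¹ * S := by
    noncomm_ring
  rw [hexpand, nonsing_inv_mul S hdet, mul_nonsing_inv S hdet, mul_one, one_mul, one_mul,
    trace_add, trace_sub, trace_sub, trace_mul_comm A, mul_assoc] at hsq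
  linarith

namespace PosSemidef

variable {M : Matrix n n ℝ}

lemma sqrt_isHermitian (hM : M.PosSemidef) : hM.sqrt.IsHermitian := by
  have hD : (diagonal ((↑) ∘ (√·) ∘ hM.1.eigenvalues) : Matrix n n ℝ).PosSemidef :=
    posSemidef_diagonal_iff.mpr fun _ => by simp [Real.sqrt_nonneg]
  simpa [sqrt, star_eq_conjTranspose] using
    (hD.mul_mul_conjTranspose_same (hM.1.eigenvectorUnitary : Matrix n n ℝ)).isHermitian

lemma sqrt_mul_self (hM : M.PosSemidef) : hM.sqrt * hM.sqrt = M := by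
  set U : Matrix n n ℝ := hM.1.eigenvectorUnitary.1
  set D : Matrix n n ℝ := diagonal ((↑) ∘ (√·) ∘ hM.1.eigenvalues)
  have hUU : star U * U = 1 := Unitary.coe_star_mul_self hM.1.eigenvectorUnitary
  have hDD : D * D = diagonal (RCLike.ofReal ∘ hM.1.eigenvalues) := by
    simp only [D, diagonal_mul_diagonal, Function.comp_apply,
      Real.mul_self_sqrt (hM.eigenvalues_nonneg _)]
    rfl
  calc hM.sqrt * hM.sqrt = U * (D * (star U * U) * D) * star U := by
        simp only [sqrt, U, D, mul_assoc]
    _ = M := by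
        rw [hUU, mul_one, hDD]
        conv_rhs => rw [hM.1.spectral_theorem, Unitary.conjStarAlgAut_apply]

end PosSemidef

end Matrix

theorem trace_inv_add_trace_ge (n : ℕ) (M S : Matrix (Fin n) (Fin n) ℝ)
    (hM : M.PosSemidef) (hS : S.PosDef) :
    2 * Matrix.trace hM.sqrt ≤ Matrix.trace (S⁻¹ * M) + Matrix.trace S := by
  simpa only [hM.sqrt_mul_self] using
    two_mul_trace_le_trace_inv_mul_mul_self_add_trace hM.sqrt_isHermitian hS
end

section
/- Let Z be any real n×m matrix. Then 2·Tr(√(Zᵀ Z)) is the greatest lower bound of the set { Tr(Zᵀ S⁻¹ Z) + Tr(S) : S an n×n real positive definite matrix }; i.e., every such value is ≥ 2·Tr(√(ZᵀZ)), and values arbitrarily close to 2·Tr(√(ZᵀZ)) are attained by positive definite S (e.g. S = √(ZZᵀ + εI) for small ε > 0). -/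
/-!
With `A = Z Zᵀ` and its pseudo-inverse square root `A^{-1/2}`, the polar factor
`W = A^{-1/2} Z` satisfies `W Wᵀ ≤ 1` and `Wᵀ Z = √(Zᵀ Z)`. For positive definite `S`, expanding
`0 ≤ tr ((Z - S W)ᵀ S⁻¹ (Z - S W))` and using `tr (Wᵀ S W) ≤ tr S` gives the lower bound
`2 tr √(Zᵀ Z) ≤ tr (Zᵀ S⁻¹ Z) + tr S`. Conversely `S = √A + ε` is positive definite, and in an
eigenbasis of `A` its value is `∑ (λ / (√λ + ε) + √λ + ε) ≤ 2 ∑ √λ + n ε`, while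
`tr √A = tr √(Zᵀ Z)`.
-/

open Matrix
open scoped MatrixOrder ComplexOrder

namespace Matrix

variable {m n : Type*} [Fintype m] [Fintype n]

lemma self_mul_transpose_nonneg (Z : Matrix n m ℝ) : 0 ≤ Z * Zᵀ := by
  simpa [conjTranspose_eq_transpose_of_trivial] using (posSemidef_self_mul_conjTranspose Z).nonneg

variable [DecidableEq n]

lemma PosSemidef.trace_mul_nonneg {𝕜 : Type*} [RCLike 𝕜] {A B : Matrix n n 𝕜}
    (hA : A.PosSemidef) (hB : B.PosSemidef) : 0 ≤ (A * B).trace := by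
  have h := (hA.conjTranspose_mul_mul_same (CFC.sqrt B)).trace_nonneg
  rwa [(CFC.sqrt_nonneg B).posSemidef.isHermitian.eq, trace_mul_cycle,
    CFC.sqrt_mul_sqrt_self B hB.nonneg, trace_mul_comm] at h

lemma IsHermitian.trace_cfc {𝕜 : Type*} [RCLike 𝕜] {A : Matrix n n 𝕜} (hA : A.IsHermitian)
    (f : ℝ → ℝ) : (cfc f A).trace = ∑ i, (f (hA.eigenvalues i) : 𝕜) := by
  rw [hA.cfc_eq, IsHermitian.cfc, Unitary.conjStarAlgAut_apply, trace_mul_cycle,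
    Unitary.coe_star_mul_self, Matrix.one_mul, trace_diagonal]
  rfl

lemma PosSemidef.eigenvectorUnitary_mul_diagonal_sqrt_mul_star {A : Matrix n n ℝ}
    (hA : A.PosSemidef) :
    hA.1.eigenvectorUnitary.1 * diagonal (((↑) : ℝ → ℝ) ∘ Real.sqrt ∘ hA.1.eigenvalues) *
      (star hA.1.eigenvectorUnitary : Matrix n n ℝ) = CFC.sqrt A := by
  rw [CFC.sqrt_eq_real_sqrt A hA.nonneg, cfcₙ_eq_cfc, hA.1.cfc_eq, IsHermitian.cfc,
    Unitary.conjStarAlgAut_apply]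
  rfl

lemma cfc_mul_self (f : ℝ → ℝ) {A : Matrix n n ℝ} (hA : IsSelfAdjoint A) :
    cfc f A * A = cfc (fun x => f x * x) A := by
  have hc (g : ℝ → ℝ) : ContinuousOn g (spectrum ℝ A) := A.finite_spectrum.continuousOn g
  calc cfc f A * A = cfc f A * cfc (fun x => x) A := by rw [cfc_id' ℝ A]
    _ = cfc (fun x => f x * x) A := (cfc_mul _ _ A (hc _) (hc _)).symm

lemma trace_transpose_mul_mul_le_trace {S : Matrix n n ℝ} (hS : S.PosSemidef) {W : Matrix n m ℝ}
    (hW : W * Wᵀ ≤ 1) : (Wᵀ * S * W).trace ≤ S.trace := by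
  have h := hS.trace_mul_nonneg (Matrix.le_iff.mp hW)
  rw [Matrix.mul_sub, Matrix.mul_one, trace_sub, ← Matrix.mul_assoc, trace_mul_cycle] at h
  linarith

lemma two_mul_trace_le_trace_transpose_mul_inv_mul_add_trace {S : Matrix n n ℝ} (hS : S.PosDef)
    {W : Matrix n m ℝ} (hW : W * Wᵀ ≤ 1) (Z : Matrix n m ℝ) :
    2 * (Wᵀ * Z).trace ≤ (Zᵀ * S⁻¹ * Z).trace + S.trace := by
  have hSt : Sᵀ = S := hS.isHermitian.eq
  have hSu : IsUnit S.det := hS.isUnit.map detMonoidHom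
  have hsq : (Z - S * W)ᵀ * S⁻¹ * (Z - S * W) =
      Zᵀ * S⁻¹ * Z - Zᵀ * W - Wᵀ * Z + Wᵀ * S * W := by
    simp only [transpose_sub, transpose_mul, hSt, Matrix.sub_mul, Matrix.mul_sub,
      Matrix.mul_assoc, nonsing_inv_mul_cancel_left _ _ hSu, mul_nonsing_inv_cancel_left _ _ hSu]
    abel
  have h := (hS.inv.posSemidef.conjTranspose_mul_mul_same (Z - S * W)).trace_nonneg
  rw [conjTranspose_eq_transpose_of_trivial, hsq, trace_add, trace_sub, trace_sub,
    ← trace_transpose (Zᵀ * W), transpose_mul, transpose_transpose] at h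
  linarith [trace_transpose_mul_mul_le_trace hS.posSemidef hW]

/-- The pseudo-inverse square root: `(√0)⁻¹ = 0` makes it vanish on the kernel of `A`. -/
noncomputable def invSqrt (A : Matrix n n ℝ) : Matrix n n ℝ := cfc (fun x => (√x)⁻¹) A

lemma transpose_invSqrt (A : Matrix n n ℝ) : (invSqrt A)ᵀ = invSqrt A := by
  rw [← conjTranspose_eq_transpose_of_trivial]
  exact (cfc_predicate _ A : IsSelfAdjoint (invSqrt A)).star_eq

lemma invSqrt_nonneg (A : Matrix n n ℝ) : 0 ≤ invSqrt A :=
  cfc_nonneg fun x _ => inv_nonneg.mpr (Real.sqrt_nonneg x)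

lemma invSqrt_mul_self {A : Matrix n n ℝ} (hA : 0 ≤ A) : invSqrt A * A = CFC.sqrt A := by
  rw [invSqrt, cfc_mul_self _ hA.isSelfAdjoint, CFC.sqrt_eq_real_sqrt A hA, cfcₙ_eq_cfc]
  simp only [← div_eq_inv_mul, Real.div_sqrt]

lemma invSqrt_mul_self_mul_invSqrt_le_one {A : Matrix n n ℝ} (hA : 0 ≤ A) :
    invSqrt A * A * invSqrt A ≤ 1 := by
  rw [invSqrt_mul_self hA, CFC.sqrt_eq_real_sqrt A hA, cfcₙ_eq_cfc, invSqrt,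
    ← cfc_mul _ _ A (A.finite_spectrum.continuousOn _) (A.finite_spectrum.continuousOn _)]
  exact cfc_le_one _ A fun x _ => mul_inv_le_one

/-- `invSqrt (Z Zᵀ) * (Z Zᵀ) * invSqrt (Z Zᵀ)` is the projection onto the column space of `Z`. -/
lemma invSqrt_mul_mul_transpose_mul_invSqrt_mul (Z : Matrix n m ℝ) :
    invSqrt (Z * Zᵀ) * (Z * Zᵀ) * invSqrt (Z * Zᵀ) * Z = Z := by
  have hA := self_mul_transpose_nonneg Z
  have h : (invSqrt (Z * Zᵀ) * (Z * Zᵀ) * invSqrt (Z * Zᵀ) - 1) * (Z * Zᵀ) = 0 := by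
    rw [Matrix.sub_mul, Matrix.one_mul, Matrix.mul_assoc _ (invSqrt _), invSqrt_mul_self hA,
      CFC.sqrt_mul_sqrt_self _ hA, sub_self]
  rwa [← conjTranspose_eq_transpose_of_trivial, mul_self_mul_conjTranspose_eq_zero,
    Matrix.sub_mul, Matrix.one_mul, sub_eq_zero] at h

noncomputable def polarFactor (Z : Matrix n m ℝ) : Matrix n m ℝ := invSqrt (Z * Zᵀ) * Z

lemma polarFactor_mul_transpose_le_one (Z : Matrix n m ℝ) :
    polarFactor Z * (polarFactor Z)ᵀ ≤ 1 := by
  rw [polarFactor, transpose_mul, transpose_invSqrt, Matrix.mul_assoc,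
    ← Matrix.mul_assoc Z, ← Matrix.mul_assoc]
  exact invSqrt_mul_self_mul_invSqrt_le_one (self_mul_transpose_nonneg Z)

lemma transpose_polarFactor_mul_self [DecidableEq m] (Z : Matrix n m ℝ) :
    (polarFactor Z)ᵀ * Z = CFC.sqrt (Zᵀ * Z) := by
  rw [polarFactor, transpose_mul, transpose_invSqrt]
  refine (CFC.sqrt_unique ?_ ?_).symm
  · calc Zᵀ * invSqrt (Z * Zᵀ) * Z * (Zᵀ * invSqrt (Z * Zᵀ) * Z)
        = Zᵀ * (invSqrt (Z * Zᵀ) * (Z * Zᵀ) * invSqrt (Z * Zᵀ) * Z) := by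
          simp only [Matrix.mul_assoc]
      _ = Zᵀ * Z := by rw [invSqrt_mul_mul_transpose_mul_invSqrt_mul]
  · simpa [conjTranspose_eq_transpose_of_trivial] using
      ((invSqrt_nonneg _).posSemidef.conjTranspose_mul_mul_same Z).nonneg

lemma trace_sqrt_mul_transpose [DecidableEq m] (Z : Matrix n m ℝ) :
    (CFC.sqrt (Z * Zᵀ)).trace = (CFC.sqrt (Zᵀ * Z)).trace := by
  rw [← transpose_polarFactor_mul_self, polarFactor, transpose_mul, transpose_invSqrt,
    trace_mul_cycle, trace_mul_comm, invSqrt_mul_self (self_mul_transpose_nonneg Z)]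

lemma exists_posDef_trace_transpose_mul_inv_mul_add_trace_le [DecidableEq m]
    (Z : Matrix n m ℝ) {ε : ℝ} (hε : 0 < ε) : ∃ S : Matrix n n ℝ, S.PosDef ∧
      (Zᵀ * S⁻¹ * Z).trace + S.trace ≤ 2 * (CFC.sqrt (Zᵀ * Z)).trace + Fintype.card n * ε := by
  have hA : (Z * Zᵀ).PosSemidef := (self_mul_transpose_nonneg Z).posSemidef
  have hc (f : ℝ → ℝ) : ContinuousOn f (spectrum ℝ (Z * Zᵀ)) :=
    (Z * Zᵀ).finite_spectrum.continuousOn f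
  have hpos (x : ℝ) : 0 < √x + ε := by positivity
  have hinv : (cfc (fun x => √x + ε) (Z * Zᵀ))⁻¹ = cfc (fun x => (√x + ε)⁻¹) (Z * Zᵀ) := by
    refine inv_eq_left_inv ?_
    rw [← cfc_mul _ _ _ (hc _) (hc _)]
    simp only [inv_mul_cancel₀ (hpos _).ne']
    exact cfc_const_one ℝ _
  refine ⟨cfc (fun x => √x + ε) (Z * Zᵀ), ?_, ?_⟩
  · refine ((cfc_nonneg fun x _ => (hpos x).le).posSemidef.posDef_iff_isUnit).mpr ?_
    exact (isUnit_cfc_iff _ _ (hc _)).mpr fun x _ => (hpos x).ne'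
  · rw [← trace_sqrt_mul_transpose, trace_mul_cycle, trace_mul_comm, hinv,
      cfc_mul_self _ hA.isHermitian, CFC.sqrt_eq_real_sqrt _ hA.nonneg, cfcₙ_eq_cfc]
    simp only [hA.isHermitian.trace_cfc, RCLike.ofReal_real_eq_id, id, Finset.sum_add_distrib,
      Finset.sum_const, Finset.card_univ, nsmul_eq_mul]
    have hle (x : ℝ) (hx : 0 ≤ x) : (√x + ε)⁻¹ * x ≤ √x := by
      rw [inv_mul_le_iff₀ (hpos x)]
      nlinarith [Real.mul_self_sqrt hx, Real.sqrt_nonneg x]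
    linarith [Finset.sum_le_sum (s := Finset.univ) fun i _ => hle _ (hA.eigenvalues_nonneg i)]

end Matrix

theorem nuclear_norm_variational (n m : ℕ) (Z : Matrix (Fin n) (Fin m) ℝ)
    (hZ : (Zᵀ * Z).PosSemidef) :
    IsGLB {x : ℝ | ∃ S : Matrix (Fin n) (Fin n) ℝ, S.PosDef ∧
        x = Matrix.trace (Zᵀ * S⁻¹ * Z) + Matrix.trace S}
      (2 * Matrix.trace (hZ.1.eigenvectorUnitary.1 *
        diagonal (((↑) : ℝ → ℝ) ∘ Real.sqrt ∘ hZ.1.eigenvalues) *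
        (star hZ.1.eigenvectorUnitary : Matrix (Fin m) (Fin m) ℝ))) := by
  rw [hZ.eigenvectorUnitary_mul_diagonal_sqrt_mul_star]
  refine ⟨?_, fun b hb => le_of_forall_pos_lt_add fun δ hδ => ?_⟩
  · rintro x ⟨S, hS, rfl⟩
    rw [← transpose_polarFactor_mul_self]
    exact two_mul_trace_le_trace_transpose_mul_inv_mul_add_trace hS
      (polarFactor_mul_transpose_le_one Z) Z
  · obtain ⟨S, hS, hle⟩ :=
      exists_posDef_trace_transpose_mul_inv_mul_add_trace_le Z (ε := δ / (n + 1)) (by positivity)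
    have hsmall : (n : ℝ) * (δ / (n + 1)) < δ := by
      rw [mul_div_assoc', div_lt_iff₀ (by positivity)]
      linarith
    rw [Fintype.card_fin] at hle
    exact (hb ⟨S, hS, rfl⟩).trans_lt (by linarith)
end

section
/- Let U and U' be real d×k matrices, and suppose every row uⁱ of U is nonzero. Define weights pⁱ = 1/(2‖uⁱ‖₂) for i = 1,…,d. If Σᵢ pⁱ·‖u'ⁱ‖₂² ≤ Σᵢ pⁱ·‖uⁱ‖₂², then Σᵢ ‖u'ⁱ‖₂ ≤ Σᵢ ‖uⁱ‖₂, i.e. ‖U'‖_{2,1} ≤ ‖U‖_{2,1}. -/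
/-!
Concavity of the square root: its tangent line at `a > 0` gives
`√b ≤ √a + (b - a) / (2√a) = b / (2√a) + √a / 2`. Summing this over the rows with
`a = ‖uⁱ‖²`, `b = ‖u'ⁱ‖²` bounds `‖U'‖_{2,1}` by `Tr(U'ᵀPU') + ‖U‖_{2,1} / 2`, and the
hypothesis together with `Tr(UᵀPU) = ‖U‖_{2,1} / 2` finishes the proof.
-/

open Finset Real

lemma sqrt_le_tangent {a b : ℝ} (ha : 0 < a) (hb : 0 ≤ b) :
    √b ≤ 1 / (2 * √a) * b + √a / 2 := by
  have hsa : 0 < √a := sqrt_pos.mpr ha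
  have amgm : 2 * √a * √b ≤ √a ^ 2 + √b ^ 2 := two_mul_le_add_sq _ _
  rw [sq_sqrt ha.le, sq_sqrt hb] at amgm
  rw [div_mul_eq_mul_div, one_mul, div_add_div _ _ (by positivity) two_ne_zero,
    le_div_iff₀ (by positivity)]
  linarith [mul_self_sqrt ha.le]

lemma one_div_two_sqrt_mul_self {a : ℝ} (ha : 0 ≤ a) : 1 / (2 * √a) * a = √a / 2 := by
  nth_rewrite 2 [← mul_self_sqrt ha]
  rcases (sqrt_nonneg a).eq_or_lt with h | h
  · simp [← h]
  · field_simp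

lemma sum_sqrt_le_of_weighted_sum_le {ι : Type*} {s : Finset ι} {a b : ι → ℝ}
    (ha : ∀ i ∈ s, 0 < a i) (hb : ∀ i ∈ s, 0 ≤ b i)
    (h : ∑ i ∈ s, 1 / (2 * √(a i)) * b i ≤ ∑ i ∈ s, 1 / (2 * √(a i)) * a i) :
    ∑ i ∈ s, √(b i) ≤ ∑ i ∈ s, √(a i) := by
  have half : ∑ i ∈ s, 1 / (2 * √(a i)) * a i = ∑ i ∈ s, √(a i) / 2 :=
    sum_congr rfl fun i hi => one_div_two_sqrt_mul_self (ha i hi).le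
  calc ∑ i ∈ s, √(b i)
      ≤ ∑ i ∈ s, (1 / (2 * √(a i)) * b i + √(a i) / 2) :=
        sum_le_sum fun i hi => sqrt_le_tangent (ha i hi) (hb i hi)
    _ = ∑ i ∈ s, 1 / (2 * √(a i)) * b i + ∑ i ∈ s, √(a i) / 2 := sum_add_distrib
    _ ≤ ∑ i ∈ s, √(a i) / 2 + ∑ i ∈ s, √(a i) / 2 := by rw [← half]; gcongr
    _ = ∑ i ∈ s, √(a i) := by rw [← sum_add_distrib]; simp

lemma sum_sq_pos_of_ne_zero {ι : Type*} [Fintype ι] {v : ι → ℝ} (hv : v ≠ 0) :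
    0 < ∑ j, v j ^ 2 := by
  refine (sum_nonneg fun j _ => sq_nonneg (v j)).lt_of_ne fun h => hv ?_
  simp only [sq] at h
  exact dotProduct_self_eq_zero.mp h.symm

theorem l21_norm_decrease (d k : ℕ) (U U' : Matrix (Fin d) (Fin k) ℝ)
    (hrows : ∀ i, U i ≠ 0)
    (h : ∑ i, (1 / (2 * Real.sqrt (∑ j, U i j ^ 2))) * (∑ j, U' i j ^ 2) ≤
         ∑ i, (1 / (2 * Real.sqrt (∑ j, U i j ^ 2))) * (∑ j, U i j ^ 2)) :
    ∑ i, Real.sqrt (∑ j, U' i j ^ 2) ≤ ∑ i, Real.sqrt (∑ j, U i j ^ 2) :=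
  sum_sqrt_le_of_weighted_sum_le (fun i _ => sum_sq_pos_of_ne_zero (hrows i))
    (fun _ _ => sum_nonneg fun _ _ => sq_nonneg _) h
end

section
/- Let ζ > 0, and let U and U' be real d×k matrices with rows uⁱ and u'ⁱ. Define smoothed weights pⁱ = 1/(2√(‖uⁱ‖₂² + ζ)). If Σᵢ pⁱ·‖u'ⁱ‖₂² ≤ Σᵢ pⁱ·‖uⁱ‖₂², then Σᵢ √(‖u'ⁱ‖₂² + ζ) ≤ Σᵢ √(‖uⁱ‖₂² + ζ). -/
theorem smoothed_l21_norm_decrease (ζ : ℝ) (hζ : 0 < ζ)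
    (d k : ℕ) (U U' : Matrix (Fin d) (Fin k) ℝ)
    (h : ∑ i, (1 / (2 * Real.sqrt ((∑ j, U i j ^ 2) + ζ))) * (∑ j, U' i j ^ 2) ≤
         ∑ i, (1 / (2 * Real.sqrt ((∑ j, U i j ^ 2) + ζ))) * (∑ j, U i j ^ 2)) :
    ∑ i, Real.sqrt ((∑ j, U' i j ^ 2) + ζ) ≤
      ∑ i, Real.sqrt ((∑ j, U i j ^ 2) + ζ) := by
  have key : ∀ i : Fin d,
      Real.sqrt ((∑ j, U' i j ^ 2) + ζ) ≤
        Real.sqrt ((∑ j, U i j ^ 2) + ζ) +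
          ((1 / (2 * Real.sqrt ((∑ j, U i j ^ 2) + ζ))) * (∑ j, U' i j ^ 2) -
           (1 / (2 * Real.sqrt ((∑ j, U i j ^ 2) + ζ))) * (∑ j, U i j ^ 2)) := by
    intro i
    set a := (∑ j, U i j ^ 2) + ζ with ha_def
    set b := (∑ j, U' i j ^ 2) + ζ with hb_def
    have hA : 0 ≤ ∑ j, U i j ^ 2 := Finset.sum_nonneg fun j _ => sq_nonneg _
    have hB : 0 ≤ ∑ j, U' i j ^ 2 := Finset.sum_nonneg fun j _ => sq_nonneg _
    have ha : 0 < a := by rw [ha_def]; linarith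
    have hb : 0 < b := by rw [hb_def]; linarith
    have hsa : 0 < Real.sqrt a := Real.sqrt_pos.mpr ha
    have hsa2 : Real.sqrt a ^ 2 = a := Real.sq_sqrt ha.le
    have hsb2 : Real.sqrt b ^ 2 = b := Real.sq_sqrt hb.le
    have amgm : 2 * Real.sqrt a * Real.sqrt b ≤ a + b := by
      nlinarith [sq_nonneg (Real.sqrt a - Real.sqrt b)]
    have hdiff : (1 / (2 * Real.sqrt a)) * (∑ j, U' i j ^ 2) -
        (1 / (2 * Real.sqrt a)) * (∑ j, U i j ^ 2) = (b - a) / (2 * Real.sqrt a) := by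
      rw [← mul_sub]
      have : b - a = (∑ j, U' i j ^ 2) - (∑ j, U i j ^ 2) := by
        rw [ha_def, hb_def]; ring
      rw [this]; field_simp
    rw [hdiff]
    have hle : Real.sqrt b - Real.sqrt a ≤ (b - a) / (2 * Real.sqrt a) := by
      rw [le_div_iff₀ (by positivity)]
      nlinarith
    linarith
  calc ∑ i, Real.sqrt ((∑ j, U' i j ^ 2) + ζ)
      ≤ ∑ i, (Real.sqrt ((∑ j, U i j ^ 2) + ζ) +
          ((1 / (2 * Real.sqrt ((∑ j, U i j ^ 2) + ζ))) * (∑ j, U' i j ^ 2) -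
           (1 / (2 * Real.sqrt ((∑ j, U i j ^ 2) + ζ))) * (∑ j, U i j ^ 2))) :=
        Finset.sum_le_sum fun i _ => key i
    _ = (∑ i, Real.sqrt ((∑ j, U i j ^ 2) + ζ)) +
        ((∑ i, (1 / (2 * Real.sqrt ((∑ j, U i j ^ 2) + ζ))) * (∑ j, U' i j ^ 2)) -
         (∑ i, (1 / (2 * Real.sqrt ((∑ j, U i j ^ 2) + ζ))) * (∑ j, U i j ^ 2))) := by
        rw [Finset.sum_add_distrib, Finset.sum_sub_distrib]
    _ ≤ ∑ i, Real.sqrt ((∑ j, U i j ^ 2) + ζ) := by linarith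
end
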